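/- Assume in addition that the standard mollifier η is radially symmetric and of class C¹. Let w ∈ L¹(ℝⁿ;ℝⁿ), α ∈ (0,1), K ≥ 0, δ > 0 and x ∈ ℝⁿ, and suppose that |∫_{B(x,r)} w(y) dy| ≤ K·r^{n−α} for every r ∈ (0,δ]. Then |(w * η_δ)(x)| ≤ C·K·δ^{−α}, where the constant C depends only on n and η. -/

import Mathlib

noncomputable section
open MeasureTheory Metric Set Filter
open scoped ENNReal Topology NNReal RealInnerProductSpace

abbrev Euc (n : ℕ) := EuclideanSpace ℝ (Fin n)

/-- Divergence of a vector field on Euclidean space. -/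
def divg {n : ℕ} (φ : Euc n → Euc n) (x : Euc n) : ℝ :=
  ∑ i, fderiv ℝ (fun y => φ y i) x (EuclideanSpace.single i 1)

/-- `v` is the weak gradient of `u` on `ℝⁿ`. -/
def IsWeakGrad {n : ℕ} (u : Euc n → ℝ) (v : Euc n → Euc n) : Prop :=
  ∀ φ : Euc n → Euc n, ContDiff ℝ 1 φ → HasCompactSupport φ →
    ∫ x, u x * divg φ x = - ∫ x, ⟪v x, φ x⟫

/-- `η` is a standard mollifier. -/
def IsMollifier {n : ℕ} (η : Euc n → ℝ) : Prop :=
  ContDiff ℝ (⊤ : ℕ∞) η ∧ HasCompactSupport η ∧ tsupport η ⊆ closedBall 0 1 ∧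
    (∀ y, 0 ≤ η y) ∧ ∫ y, η y = 1

/-- The rescaled mollifier `η_δ(y) = δ⁻ⁿ η(y/δ)`. -/
def mollifierScaled {n : ℕ} (η : Euc n → ℝ) (δ : ℝ) (y : Euc n) : ℝ :=
  (δ ^ n)⁻¹ * η (δ⁻¹ • y)

/-- Convolution of a vector field `v` with the scaled mollifier, at the point `x`. -/
def mollifyVec {n : ℕ} (η : Euc n → ℝ) (δ : ℝ) (v : Euc n → Euc n) (x : Euc n) : Euc n :=
  ∫ y, mollifierScaled η δ (x - y) • v y

/-- The (centered) Hardy–Littlewood maximal function, with values in `ℝ≥0∞`. -/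
def HLMax {n : ℕ} (g : Euc n → ℝ) (x : Euc n) : ℝ≥0∞ :=
  ⨆ r ∈ Set.Ioi (0 : ℝ), (∫⁻ y in ball x r, ENNReal.ofReal |g y|) / volume (ball x r)

/-- A function of the first coordinate is integrable on a product with a finite measure. -/
lemma integrable_comp_fst' {α β E : Type*} [MeasurableSpace α] [MeasurableSpace β]
    [NormedAddCommGroup E] {μ : Measure α} {ν : Measure β} [SFinite ν] [IsFiniteMeasure ν]
    {f : α → E} (hf : Integrable f μ) :
    Integrable (fun z : α × β => f z.1) (μ.prod ν) := by
  rw [integrable_prod_iff hf.aestronglyMeasurable.comp_fst]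
  refine ⟨Eventually.of_forall fun x => ?_, ?_⟩
  · simpa using integrable_const (μ := ν) (f x)
  simp only [integral_const, smul_eq_mul]
  exact hf.norm.const_mul _

/-- if `η` is in addition radially symmetric (and of class `C¹`), and the
vector field `w ∈ L¹` satisfies `|∫_{B(x,r)} w| ≤ K r^{n-α}` for all `r ∈ (0,δ]`, then
`|(w * η_δ)(x)| ≤ C K δ^{-α}`, with `C` depending only on `n` and `η`. -/
theorem mollified_vector_field_decay
    (n : ℕ) (η : Euc n → ℝ) (hη : IsMollifier η) (hη1 : ContDiff ℝ 1 η)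
    (hηrad : ∀ y y' : Euc n, ‖y‖ = ‖y'‖ → η y = η y') :
    ∃ C : ℝ, 0 < C ∧
      ∀ (w : Euc n → Euc n), Integrable w →
      ∀ (α : ℝ), α ∈ Set.Ioo (0 : ℝ) 1 →
      ∀ (K : ℝ), 0 ≤ K →
      ∀ (δ : ℝ), 0 < δ →
      ∀ x : Euc n,
        (∀ r ∈ Set.Ioc (0 : ℝ) δ, ‖∫ y in ball x r, w y‖ ≤ K * r ^ ((n : ℝ) - α)) →
        ‖mollifyVec η δ w x‖ ≤ C * K * δ ^ (-α) := by
  rcases Nat.eq_zero_or_pos n with hn | hn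
  · subst hn
    haveI : Subsingleton (Euc 0) := ⟨fun a b => by ext i; exact Fin.elim0 i⟩
    refine ⟨1, one_pos, fun w hw α hα K hK δ hδ x _ => ?_⟩
    have h0 : mollifyVec η δ w x = 0 := Subsingleton.elim _ _
    rw [h0, norm_zero, one_mul]
    exact mul_nonneg hK (Real.rpow_nonneg hδ.le _)
  -- main case n ≥ 1
  set e : Euc n := EuclideanSpace.single (⟨0, hn⟩ : Fin n) (1 : ℝ) with he
  have hene : ‖e‖ = 1 := by simp [he]
  set g : ℝ → ℝ := fun t => η (t • e) with hgdef
  have hgc : ContDiff ℝ 1 g := hη1.comp (contDiff_id.smul contDiff_const)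
  have hgrad : ∀ z : Euc n, η z = g ‖z‖ := by
    intro z
    apply hηrad
    rw [norm_smul, hene, mul_one, Real.norm_of_nonneg (norm_nonneg z)]
  have hg0 : ∀ t : ℝ, 1 < |t| → g t = 0 := by
    intro t ht
    show η (t • e) = 0
    apply image_eq_zero_of_notMem_tsupport
    intro hmem
    have h1 := hη.2.2.1 hmem
    rw [mem_closedBall, dist_zero_right, norm_smul, hene, mul_one, Real.norm_eq_abs] at h1
    exact absurd h1 (not_le.mpr ht)
  have hderiv0 : ∀ s : ℝ, 1 < s → deriv g s = 0 := by
    intro s hs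
    have h1 : g =ᶠ[𝓝 s] (fun _ => 0) := by
      filter_upwards [Ioi_mem_nhds hs] with t ht
      exact hg0 t (by rw [abs_of_pos (lt_trans one_pos ht)]; exact ht)
    rw [h1.deriv_eq]
    simp
  have hgsupp : HasCompactSupport g := by
    apply HasCompactSupport.intro (isCompact_Icc (a := (-1 : ℝ)) (b := 1))
    intro t ht
    apply hg0
    rw [Set.mem_Icc, not_and_or, not_le, not_le] at ht
    rcases ht with h | h
    · rw [abs_of_neg (by linarith)]; linarith
    · rw [abs_of_pos (by linarith)]; exact h
  have hdcont : Continuous (deriv g) := hgc.continuous_deriv le_rfl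
  obtain ⟨M, hM⟩ := hgsupp.deriv.exists_bound_of_continuous hdcont
  have hM0 : 0 ≤ M := le_trans (norm_nonneg _) (hM 0)
  refine ⟨2 * M + 1, by linarith, fun w hw α hα K hK δ hδ x hball => ?_⟩
  -- FTC identity
  have key : ∀ t : ℝ, 0 ≤ t →
      g t = ∫ s in Ioc (0 : ℝ) 2, (Ioi t).indicator (fun s => -deriv g s) s := by
    intro t ht
    rw [setIntegral_indicator measurableSet_Ioi]
    have hinter : Ioc (0 : ℝ) 2 ∩ Ioi t = Ioc t 2 := by
      ext s
      simp only [mem_inter_iff, mem_Ioc, mem_Ioi]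
      constructor
      · rintro ⟨⟨_, h2⟩, h3⟩; exact ⟨h3, h2⟩
      · rintro ⟨h1, h2⟩; exact ⟨⟨lt_of_le_of_lt ht h1, h2⟩, h1⟩
    rw [hinter]
    rcases le_or_gt t 2 with h2 | h2
    · rw [← intervalIntegral.integral_of_le h2]
      have hftc := intervalIntegral.integral_deriv_eq_sub (f := g) (a := t) (b := 2)
        (fun s _ => (hgc.differentiable one_ne_zero).differentiableAt)
        (hdcont.intervalIntegrable t 2)
      have hg2 : g 2 = 0 := hg0 2 (by norm_num)
      rw [intervalIntegral.integral_neg, hftc, hg2]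
      ring
    · rw [Set.Ioc_eq_empty (not_lt.mpr h2.le), Measure.restrict_empty, integral_zero_measure]
      exact hg0 t (by rw [abs_of_pos (by linarith)]; linarith)
  -- set up the double integral
  set F : Euc n × ℝ → Euc n :=
    fun p => if ‖x - p.1‖ / δ < p.2 then (-deriv g p.2) • w p.1 else 0 with hFdef
  set ν : Measure ℝ := volume.restrict (Ioc (0 : ℝ) 2) with hν
  haveI : IsFiniteMeasure ν := ⟨by
    rw [hν, Measure.restrict_apply_univ, Real.volume_Ioc]
    norm_num⟩
  -- a.e. strong measurability of F
  have hS : MeasurableSet {p : Euc n × ℝ | ‖x - p.1‖ / δ < p.2} := by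
    apply measurableSet_lt
    · exact (Continuous.measurable (by fun_prop))
    · exact measurable_snd
  have hFaesm : AEStronglyMeasurable F (volume.prod ν) := by
    have h1 : AEStronglyMeasurable (fun p : Euc n × ℝ => (-deriv g p.2) • w p.1)
        (volume.prod ν) :=
      (hdcont.neg.comp continuous_snd).aestronglyMeasurable.smul hw.aestronglyMeasurable.comp_fst
    have h2 : F = {p : Euc n × ℝ | ‖x - p.1‖ / δ < p.2}.indicator
        (fun p => (-deriv g p.2) • w p.1) := by
      funext p
      rw [hFdef, Set.indicator_apply]
      rfl
    rw [h2]
    exact h1.indicator hS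
  -- integrability of F
  have hFint : Integrable F (volume.prod ν) := by
    apply Integrable.mono' (g := fun p : Euc n × ℝ => M * ‖w p.1‖)
      (integrable_comp_fst' (hw.norm.const_mul M)) hFaesm
    refine Eventually.of_forall fun p => ?_
    rw [hFdef]
    dsimp only
    split_ifs with h
    · rw [norm_smul, norm_neg]
      exact mul_le_mul_of_nonneg_right (hM p.2) (norm_nonneg _)
    · rw [norm_zero]
      exact mul_nonneg hM0 (norm_nonneg _)
  -- pointwise identity in y
  have h2 : ∀ y : Euc n, g (‖x - y‖ / δ) • w y = ∫ s in Ioc (0 : ℝ) 2, F (y, s) := by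
    intro y
    rw [key (‖x - y‖ / δ) (by positivity), ← integral_smul_const]
    apply integral_congr_ae
    refine Eventually.of_forall fun s => ?_
    simp only [hFdef]
    rw [Set.indicator_apply]
    simp only [mem_Ioi]
    split_ifs with h
    · rfl
    · rw [zero_smul]
  -- the mollified field as a double integral
  have h1 : mollifyVec η δ w x = (δ ^ n)⁻¹ • ∫ y, ∫ s in Ioc (0 : ℝ) 2, F (y, s) := by
    rw [mollifyVec]
    have : ∀ y : Euc n, mollifierScaled η δ (x - y) • w y
        = (δ ^ n)⁻¹ • (g (‖x - y‖ / δ) • w y) := by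
      intro y
      rw [mollifierScaled, hgrad, mul_smul]
      congr 2
      rw [norm_smul, norm_inv, Real.norm_eq_abs, abs_of_pos hδ, inv_mul_eq_div]
    simp_rw [this, h2]
    rw [integral_smul]
  -- swap the integrals
  have hswap : ∫ y, ∫ s in Ioc (0 : ℝ) 2, F (y, s)
      = ∫ s in Ioc (0 : ℝ) 2, ∫ y, F (y, s) := by
    exact integral_integral_swap hFint
  -- identify the inner integral
  have h3 : ∀ s : ℝ, ∫ y, F (y, s) = (-deriv g s) • ∫ y in ball x (s * δ), w y := by
    intro s
    have heq : (fun y => F (y, s)) = (ball x (s * δ)).indicator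
        (fun y => (-deriv g s) • w y) := by
      funext y
      have hiff : (‖x - y‖ / δ < s) = (y ∈ ball x (s * δ)) := by
        rw [mem_ball, dist_eq_norm, norm_sub_rev y x]
        exact propext (div_lt_iff₀ hδ)
      simp only [hFdef]
      by_cases h : ‖x - y‖ / δ < s
      · rw [if_pos h, Set.indicator_of_mem (hiff ▸ h)]
      · rw [if_neg h, Set.indicator_of_notMem (show y ∉ ball x (s * δ) from hiff ▸ h)]
    rw [heq, integral_indicator measurableSet_ball, integral_smul]
  -- norm bound on the outer integral
  have hnα : (0 : ℝ) ≤ (n : ℝ) - α := by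
    have : (1 : ℝ) ≤ (n : ℝ) := by exact_mod_cast hn
    linarith [hα.2]
  have hGbound : ∀ s ∈ Ioc (0 : ℝ) 2, ‖∫ y, F (y, s)‖ ≤ M * (K * δ ^ ((n : ℝ) - α)) := by
    intro s hs
    rw [h3]
    rcases le_or_gt s 1 with hs1 | hs1
    · rw [norm_smul, norm_neg]
      have hr : s * δ ∈ Set.Ioc (0 : ℝ) δ := by
        constructor
        · exact mul_pos hs.1 hδ
        · nlinarith [hδ.le]
      have hb := hball (s * δ) hr
      have hp : (s * δ) ^ ((n : ℝ) - α) ≤ δ ^ ((n : ℝ) - α) :=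
        Real.rpow_le_rpow (mul_nonneg hs.1.le hδ.le) (by nlinarith [hδ.le]) hnα
      calc ‖deriv g s‖ * ‖∫ y in ball x (s * δ), w y‖
          ≤ M * (K * (s * δ) ^ ((n : ℝ) - α)) := by
            apply mul_le_mul (hM s) hb (norm_nonneg _) hM0
        _ ≤ M * (K * δ ^ ((n : ℝ) - α)) := by
            apply mul_le_mul_of_nonneg_left (mul_le_mul_of_nonneg_left hp hK) hM0
    · rw [hderiv0 s hs1, neg_zero, zero_smul, norm_zero]
      exact mul_nonneg hM0 (mul_nonneg hK (Real.rpow_nonneg hδ.le _))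
  have hGaesm : AEStronglyMeasurable (fun s => ∫ y, F (y, s)) ν := by
    have := (hFint.swap.aestronglyMeasurable).integral_prod_right'
    exact this
  have hnormI : ‖∫ s in Ioc (0 : ℝ) 2, ∫ y, F (y, s)‖
      ≤ M * (K * δ ^ ((n : ℝ) - α)) * 2 := by
    have hvol : volume (Ioc (0 : ℝ) 2) < ⊤ := by
      rw [Real.volume_Ioc]; exact ENNReal.ofReal_lt_top
    have := norm_setIntegral_le_of_norm_le_const (μ := volume) hvol hGbound
    simpa [Real.volume_real_Ioc_of_le, Real.volume_Ioc, ENNReal.toReal_ofReal] using this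
  -- assemble
  rw [h1, hswap, norm_smul, norm_inv, Real.norm_eq_abs, abs_of_pos (pow_pos hδ n)]
  have hpow : (δ ^ n)⁻¹ * (M * (K * δ ^ ((n : ℝ) - α)) * 2) = 2 * M * K * δ ^ (-α) := by
    rw [← Real.rpow_natCast δ n, ← Real.rpow_neg hδ.le]
    rw [show (2 : ℝ) * M * K * δ ^ (-α) = M * K * 2 * (δ ^ (-α)) by ring]
    rw [show δ ^ (-(n : ℝ)) * (M * (K * δ ^ ((n : ℝ) - α)) * 2)
        = M * K * 2 * (δ ^ (-(n : ℝ)) * δ ^ ((n : ℝ) - α)) by ring]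
    rw [← Real.rpow_add hδ]
    ring_nf
  calc (δ ^ n)⁻¹ * ‖∫ s in Ioc (0 : ℝ) 2, ∫ y, F (y, s)‖
      ≤ (δ ^ n)⁻¹ * (M * (K * δ ^ ((n : ℝ) - α)) * 2) := by
        apply mul_le_mul_of_nonneg_left hnormI (by positivity)
    _ = 2 * M * K * δ ^ (-α) := hpow
    _ ≤ (2 * M + 1) * K * δ ^ (-α) := by
        have h := mul_nonneg hK (Real.rpow_nonneg hδ.le (-α))
        nlinarith
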